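/- Under the stated setup, let λ ∈ ℝ^n with Z_λ finite, and suppose γ̂ ∈ ℝ^n is a global maximizer of γ ↦ A(γ, λ) with Z_{γ̂+λ} finite, with M(λ) := γ̂ + λ. Assume for every direction γ ∈ ℝ^n the derivatives d/dt A(tγ, λ)|_{t=0} and d/dt L(λ + tγ)|_{t=0} exist and are equal (termwise differentiation of the defining series being justified). Then the following are equivalent: (i) L(M(λ)) = L(λ); (ii) λ is a fixed point of M, i.e. γ = 0 maximizes A(γ, λ); (iii) λ is a critical point of L, i.e. for every γ ∈ ℝ^n, d/dt L(λ + tγ)|_{t=0} = 0. -/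

import Mathlib

/-!
`A(·, λ)` is concave with `A(0, λ) = 0`, and it minorizes the gain of the likelihood:
`A(γ, λ) ≤ L(γ + λ) - L(λ)` (Jensen for `log` under `k_λ` for the `k_λ` term, Jensen for `exp`
and `log t ≤ t - 1` for the `p_λ` term). So (i) gives `max A ≤ 0 = A(0)`, which is (ii).
Conversely, if `A(γ̂) = 0 = A(0)` is the maximum, `A` is constant on the segment `[0, γ̂]`; but
`γ ↦ p_λ[∑ ν̄_i e^{γ_i ν_#}]` is strictly convex along every segment on which `γ·ν` is not
constant, so `γ̂·ν ≡ 0` and `p_{γ̂+λ} = p_λ`. Finally (ii) ⇔ (iii) because the directional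
derivatives of `A` and `L` agree, and for a concave function a vanishing derivative at `0`
characterizes a maximum at `0`.
-/

/- Common setup: log-linear models over proof trees (complete data X) and
   queries (incomplete data Y). -/

variable {X Y : Type*}

/-- `ν_#(x) = ∑ i, ν_i(x)`. -/
def nuSharp {n : ℕ} (ν : Fin n → X → ℕ) (x : X) : ℕ := ∑ i, ν i x

/-- weighted property sum `λ·ν(x)`. -/
noncomputable def wdot {n : ℕ} (l : Fin n → ℝ) (ν : Fin n → X → ℕ) (x : X) : ℝ :=
  ∑ i, l i * (ν i x : ℝ)

/-- normalizing constant `Z_λ`. -/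
noncomputable def Zpart (p0 : X → ℝ) {n : ℕ} (ν : Fin n → X → ℕ) (l : Fin n → ℝ) : ℝ :=
  ∑' x : X, Real.exp (wdot l ν x) * p0 x

/-- log-linear distribution `p_λ(x)`. -/
noncomputable def pLL (p0 : X → ℝ) {n : ℕ} (ν : Fin n → X → ℕ) (l : Fin n → ℝ) (x : X) : ℝ :=
  (Zpart p0 ν l)⁻¹ * Real.exp (wdot l ν x) * p0 x

/-- incomplete-data probability `p_λ(y) = ∑_{x ∈ X(y)} p_λ(x)`. -/
noncomputable def pLLY (Yf : X → Y) (p0 : X → ℝ) {n : ℕ} (ν : Fin n → X → ℕ)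
    (l : Fin n → ℝ) (y : Y) : ℝ :=
  ∑' x : {x : X // Yf x = y}, pLL p0 ν l x.1

/-- incomplete-data log-likelihood `L(λ) = ∑_{y ∈ 𝒴} ln p_λ(y)`. -/
noncomputable def LL (Yf : X → Y) (p0 : X → ℝ) {n : ℕ} (ν : Fin n → X → ℕ)
    (𝒴 : Multiset Y) (l : Fin n → ℝ) : ℝ :=
  (𝒴.map fun y => Real.log (pLLY Yf p0 ν l y)).sum

/-- expectation `p_λ[f]`. -/
noncomputable def pExp (p0 : X → ℝ) {n : ℕ} (ν : Fin n → X → ℕ) (l : Fin n → ℝ)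
    (f : X → ℝ) : ℝ :=
  ∑' x : X, pLL p0 ν l x * f x

/-- conditional expectation `k_λ[f]` given observed `y`. -/
noncomputable def kExp (Yf : X → Y) (p0 : X → ℝ) {n : ℕ} (ν : Fin n → X → ℕ)
    (l : Fin n → ℝ) (y : Y) (f : X → ℝ) : ℝ :=
  ∑' x : {x : X // Yf x = y}, (pLL p0 ν l x.1 / pLLY Yf p0 ν l y) * f x.1

/-- auxiliary function
`A(γ,λ) = ∑_{y∈𝒴} (1 + k_λ[γ·ν] − p_λ[∑ i, ν̄_i e^{γ_i ν_#}])`. -/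
noncomputable def Aaux (Yf : X → Y) (p0 : X → ℝ) {n : ℕ} (ν : Fin n → X → ℕ)
    (𝒴 : Multiset Y) (γ l : Fin n → ℝ) : ℝ :=
  (𝒴.map fun y =>
    1 + kExp Yf p0 ν l y (fun x => wdot γ ν x)
      - pExp p0 ν l (fun x =>
          ∑ i, ((ν i x : ℝ) / (nuSharp ν x : ℝ)) * Real.exp (γ i * (nuSharp ν x : ℝ)))).sum

open Set Real

section Tsum

variable {ι : Type*} {q f g : ι → ℝ}

lemma tsum_mul_linear_comb (hf : Summable fun i => q i * f i) (hg : Summable fun i => q i * g i)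
    (a b : ℝ) :
    ∑' i, q i * (a * f i + b * g i) = a * ∑' i, q i * f i + b * ∑' i, q i * g i := by
  rw [← tsum_mul_left, ← tsum_mul_left, ← (hf.mul_left a).tsum_add (hg.mul_left b)]
  exact tsum_congr fun i => by ring

lemma tsum_mul_log_le_log_tsum (hq : ∀ i, 0 ≤ q i) (hq1 : ∑' i, q i = 1) (hf : ∀ i, 0 < f i)
    (hqf : Summable fun i => q i * f i) (hqlog : Summable fun i => q i * log (f i)) :
    ∑' i, q i * log (f i) ≤ log (∑' i, q i * f i) := by
  have hqs : Summable q := by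
    by_contra h
    simp [tsum_eq_zero_of_not_summable h] at hq1
  obtain ⟨i₀, hi₀⟩ : ∃ i, q i ≠ 0 := by
    by_contra! h
    simp [h] at hq1
  set S := ∑' i, q i * f i
  have hS : 0 < S :=
    hqf.tsum_pos (fun i => mul_nonneg (hq i) (hf i).le) i₀
      (mul_pos ((hq i₀).lt_of_ne' hi₀) (hf i₀))
  -- `log t ≤ log S + t / S - 1` is `log (t / S) ≤ t / S - 1`
  have hpt : ∀ i, q i * log (f i) ≤ q i * (log S + f i / S - 1) := fun i => by
    refine mul_le_mul_of_nonneg_left ?_ (hq i)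
    have := log_le_sub_one_of_pos (div_pos (hf i) hS)
    rw [log_div (hf i).ne' hS.ne'] at this
    linarith
  have hsum : ∑' i, q i * (log S + f i / S - 1) = log S := by
    have : ∀ i, q i * (log S + f i / S - 1) = (log S - 1) * q i + S⁻¹ * (q i * f i) :=
      fun i => by ring
    rw [tsum_congr this, (hqs.mul_left _).tsum_add (hqf.mul_left _), tsum_mul_left,
      tsum_mul_left, hq1, inv_mul_cancel₀ hS.ne']
    ring
  calc ∑' i, q i * log (f i) ≤ ∑' i, q i * (log S + f i / S - 1) :=
        hqlog.tsum_le_tsum hpt <| ((hqs.mul_left (log S - 1)).add (hqf.mul_left S⁻¹)).congr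
          fun i => by ring
    _ = log S := hsum

end Tsum

section Mixture

variable {X : Type*} {n : ℕ}

noncomputable def nuBarExp (γ : Fin n → ℝ) (ν : Fin n → X → ℕ) (x : X) : ℝ :=
  ∑ i, ((ν i x : ℝ) / (nuSharp ν x : ℝ)) * Real.exp (γ i * (nuSharp ν x : ℝ))

variable {ν : Fin n → X → ℕ} {x : X}

lemma wdot_add (a b : Fin n → ℝ) (ν : Fin n → X → ℕ) (x : X) :
    wdot (a + b) ν x = wdot a ν x + wdot b ν x := by
  simp [wdot, add_mul, Finset.sum_add_distrib]

lemma wdot_smul (t : ℝ) (γ : Fin n → ℝ) (ν : Fin n → X → ℕ) (x : X) :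
    wdot (t • γ) ν x = t * wdot γ ν x := by
  simp [wdot, Finset.mul_sum, mul_assoc]

lemma sum_div_nuSharp (h : 1 ≤ nuSharp ν x) : ∑ i, (ν i x : ℝ) / (nuSharp ν x : ℝ) = 1 := by
  have : (0 : ℝ) < nuSharp ν x := by exact_mod_cast h
  rw [← Finset.sum_div, ← Nat.cast_sum]
  exact div_self this.ne'

lemma nuBarExp_zero (h : 1 ≤ nuSharp ν x) : nuBarExp 0 ν x = 1 := by
  simp [nuBarExp, sum_div_nuSharp h]

lemma exp_wdot_le_nuBarExp (h : 1 ≤ nuSharp ν x) (γ : Fin n → ℝ) :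
    exp (wdot γ ν x) ≤ nuBarExp γ ν x := by
  have hpos : (0 : ℝ) < nuSharp ν x := by exact_mod_cast h
  have hmean : ∑ i, ((ν i x : ℝ) / nuSharp ν x) • (γ i * nuSharp ν x) = wdot γ ν x :=
    Finset.sum_congr rfl fun i _ => by rw [smul_eq_mul]; field_simp
  rw [← hmean]
  exact convexOn_exp.map_sum_le (t := Finset.univ) (p := fun i => γ i * nuSharp ν x)
    (fun i _ => by positivity) (sum_div_nuSharp h) (fun i _ => mem_univ _)

lemma nuBar_mul_exp_le (i : Fin n) (u v : Fin n → ℝ) {a b : ℝ} (ha : 0 ≤ a) (hb : 0 ≤ b)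
    (hab : a + b = 1) :
    (ν i x : ℝ) / nuSharp ν x * exp ((a • u + b • v) i * nuSharp ν x) ≤
      a * ((ν i x : ℝ) / nuSharp ν x * exp (u i * nuSharp ν x)) +
        b * ((ν i x : ℝ) / nuSharp ν x * exp (v i * nuSharp ν x)) := by
  have hc := convexOn_exp.2 (mem_univ (u i * nuSharp ν x)) (mem_univ (v i * nuSharp ν x))
    ha hb hab
  have := mul_le_mul_of_nonneg_left hc (by positivity : (0 : ℝ) ≤ ν i x / nuSharp ν x)
  simp only [smul_eq_mul, Pi.add_apply, Pi.smul_apply, add_mul, mul_assoc] at this ⊢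
  linear_combination this

lemma convexOn_nuBarExp (ν : Fin n → X → ℕ) (x : X) :
    ConvexOn ℝ univ fun γ : Fin n → ℝ => nuBarExp γ ν x := by
  refine ⟨convex_univ, fun u _ v _ a b ha hb hab => ?_⟩
  simp only [nuBarExp, smul_eq_mul, Finset.mul_sum, ← Finset.sum_add_distrib]
  exact Finset.sum_le_sum fun i _ => nuBar_mul_exp_le i u v ha hb hab

lemma nuBarExp_lt_of_wdot_ne {u v : Fin n → ℝ} (huv : wdot u ν x ≠ wdot v ν x) {a b : ℝ}
    (ha : 0 < a) (hb : 0 < b) (hab : a + b = 1) :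
    nuBarExp (a • u + b • v) ν x < a * nuBarExp u ν x + b * nuBarExp v ν x := by
  obtain ⟨j, -, hj⟩ : ∃ j ∈ Finset.univ, (u j - v j) * ν j x ≠ 0 := by
    refine Finset.exists_ne_zero_of_sum_ne_zero ?_
    simpa [wdot, sub_mul, Finset.sum_sub_distrib, sub_eq_zero] using huv
  have hνj : (0 : ℝ) < ν j x := (Nat.cast_nonneg _).lt_of_ne' (right_ne_zero_of_mul hj)
  have hns : (0 : ℝ) < nuSharp ν x := hνj.trans_le <| by
    exact_mod_cast Finset.single_le_sum (f := fun i => ν i x) (fun i _ => Nat.zero_le _)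
      (Finset.mem_univ j)
  simp only [nuBarExp, Finset.mul_sum, ← Finset.sum_add_distrib]
  refine Finset.sum_lt_sum (fun i _ => nuBar_mul_exp_le i u v ha.le hb.le hab)
    ⟨j, Finset.mem_univ _, ?_⟩
  have hne : u j * nuSharp ν x ≠ v j * nuSharp ν x := fun h =>
    hj (by rw [sub_mul, mul_right_cancel₀ hns.ne' h, sub_self])
  have := mul_lt_mul_of_pos_left (strictConvexOn_exp.2 (mem_univ _) (mem_univ _) hne ha hb hab)
    (div_pos hνj hns)
  simp only [smul_eq_mul, Pi.add_apply, Pi.smul_apply, add_mul, mul_assoc] at this ⊢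
  linear_combination this

end Mixture

section LogLinear

variable {X Y : Type*} {n : ℕ} {p0 : X → ℝ} {ν : Fin n → X → ℕ} {l : Fin n → ℝ}

lemma Zpart_pos [Nonempty X] (hp0 : ∀ x, 0 < p0 x)
    (hZ : Summable fun x : X => exp (wdot l ν x) * p0 x) : 0 < Zpart p0 ν l :=
  hZ.tsum_pos (fun x => (mul_pos (exp_pos _) (hp0 x)).le) (Classical.arbitrary X)
    (mul_pos (exp_pos _) (hp0 _))

lemma pLL_nonneg (hp0 : ∀ x, 0 ≤ p0 x) (x : X) : 0 ≤ pLL p0 ν l x :=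
  mul_nonneg (mul_nonneg (inv_nonneg.2 (tsum_nonneg fun x => mul_nonneg (exp_pos _).le (hp0 x)))
    (exp_pos _).le) (hp0 x)

lemma pLL_pos [Nonempty X] (hp0 : ∀ x, 0 < p0 x)
    (hZ : Summable fun x : X => exp (wdot l ν x) * p0 x) (x : X) : 0 < pLL p0 ν l x :=
  mul_pos (mul_pos (inv_pos.2 (Zpart_pos hp0 hZ)) (exp_pos _)) (hp0 x)

lemma pLL_eq_inv_mul (x : X) :
    pLL p0 ν l x = (Zpart p0 ν l)⁻¹ * (exp (wdot l ν x) * p0 x) :=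
  mul_assoc _ _ _

lemma summable_pLL (hZ : Summable fun x : X => exp (wdot l ν x) * p0 x) :
    Summable (pLL p0 ν l) :=
  (hZ.mul_left _).congr fun x => (pLL_eq_inv_mul x).symm

lemma tsum_pLL [Nonempty X] (hp0 : ∀ x, 0 < p0 x)
    (hZ : Summable fun x : X => exp (wdot l ν x) * p0 x) : ∑' x, pLL p0 ν l x = 1 := by
  simp only [pLL_eq_inv_mul, tsum_mul_left]
  exact inv_mul_cancel₀ (Zpart_pos hp0 hZ).ne'

lemma pLL_add (γ : Fin n → ℝ) (hZ : Zpart p0 ν l ≠ 0) (x : X) :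
    pLL p0 ν (γ + l) x = Zpart p0 ν l / Zpart p0 ν (γ + l) * exp (wdot γ ν x) * pLL p0 ν l x := by
  rw [pLL, pLL, wdot_add, exp_add]
  field_simp

lemma pExp_exp_wdot (γ : Fin n → ℝ) :
    pExp p0 ν l (fun x => exp (wdot γ ν x)) = Zpart p0 ν (γ + l) / Zpart p0 ν l := by
  simp only [pExp, pLL_eq_inv_mul, Zpart, wdot_add, exp_add, div_eq_inv_mul, ← tsum_mul_left]
  exact tsum_congr fun x => by ring

lemma LL_add_of_wdot_eq_zero (Yf : X → Y) (𝒴 : Multiset Y) {γ : Fin n → ℝ}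
    (hγ : ∀ x, wdot γ ν x = 0) : LL Yf p0 ν 𝒴 (γ + l) = LL Yf p0 ν 𝒴 l := by
  simp only [LL, pLLY, pLL, Zpart, wdot_add, hγ, zero_add]

end LogLinear

section AuxiliaryFunction

variable {X Y : Type*} {n : ℕ} (Yf : X → Y) {p0 : X → ℝ} {ν : Fin n → X → ℕ} (𝒴 : Multiset Y)
  {l : Fin n → ℝ}

lemma convexOn_pExp_nuBarExp (hp0 : ∀ x, 0 ≤ p0 x)
    (hsum : ∀ γ, Summable fun x => pLL p0 ν l x * nuBarExp γ ν x) :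
    ConvexOn ℝ univ fun γ => pExp p0 ν l (nuBarExp γ ν) := by
  refine ⟨convex_univ, fun u _ v _ a b ha hb hab => ?_⟩
  rw [smul_eq_mul, smul_eq_mul]
  unfold pExp
  rw [← tsum_mul_linear_comb (hsum u) (hsum v)]
  refine (hsum _).tsum_le_tsum (fun x => mul_le_mul_of_nonneg_left ?_ (pLL_nonneg hp0 x)) ?_
  · simpa only [smul_eq_mul] using (convexOn_nuBarExp ν x).2 (mem_univ u) (mem_univ v) ha hb hab
  · exact (((hsum u).mul_left a).add ((hsum v).mul_left b)).congr fun x => by ring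

lemma pExp_nuBarExp_lt (hp0 : ∀ x, 0 < p0 x) (hZ : Summable fun x => exp (wdot l ν x) * p0 x)
    (hsum : ∀ γ, Summable fun x => pLL p0 ν l x * nuBarExp γ ν x) {u v : Fin n → ℝ}
    (huv : ∃ x, wdot u ν x ≠ wdot v ν x) {a b : ℝ} (ha : 0 < a) (hb : 0 < b) (hab : a + b = 1) :
    pExp p0 ν l (nuBarExp (a • u + b • v) ν) <
      a * pExp p0 ν l (nuBarExp u ν) + b * pExp p0 ν l (nuBarExp v ν) := by
  obtain ⟨x₀, hx₀⟩ := huv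
  have : Nonempty X := ⟨x₀⟩
  unfold pExp
  rw [← tsum_mul_linear_comb (hsum u) (hsum v)]
  refine (hsum _).tsum_lt_tsum (i := x₀)
    (fun x => mul_le_mul_of_nonneg_left ?_ (pLL_nonneg (fun x => (hp0 x).le) x))
    (mul_lt_mul_of_pos_left (nuBarExp_lt_of_wdot_ne hx₀ ha hb hab) (pLL_pos hp0 hZ x₀)) ?_
  · simpa only [smul_eq_mul] using
      (convexOn_nuBarExp ν x).2 (mem_univ u) (mem_univ v) ha.le hb.le hab
  · exact (((hsum u).mul_left a).add ((hsum v).mul_left b)).congr fun x => by ring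

lemma Aaux_eq (γ : Fin n → ℝ) :
    Aaux Yf p0 ν 𝒴 γ l = 𝒴.card * (1 - pExp p0 ν l (nuBarExp γ ν)) +
      (𝒴.map fun y => kExp Yf p0 ν l y (wdot γ ν)).sum := by
  change (𝒴.map fun y => 1 + kExp Yf p0 ν l y (wdot γ ν) - pExp p0 ν l (nuBarExp γ ν)).sum = _
  simp only [add_sub_right_comm, Multiset.sum_map_add, Multiset.map_const', Multiset.sum_replicate,
    nsmul_eq_mul]

lemma Aaux_zero [Nonempty X] (hp0 : ∀ x, 0 < p0 x) (hν : ∀ x, 1 ≤ nuSharp ν x)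
    (hZ : Summable fun x => exp (wdot l ν x) * p0 x) :
    Aaux Yf p0 ν 𝒴 0 l = 0 := by
  have hE : pExp p0 ν l (nuBarExp 0 ν) = 1 := by
    simp only [pExp, nuBarExp_zero (hν _), mul_one]
    exact tsum_pLL hp0 hZ
  simp [Aaux_eq, hE, kExp, wdot]

lemma kExp_wdot_linear_comb {y : Y} {u v : Fin n → ℝ}
    (hu : Summable fun x : {x : X // Yf x = y} =>
      (pLL p0 ν l x.1 / pLLY Yf p0 ν l y) * wdot u ν x.1)
    (hv : Summable fun x : {x : X // Yf x = y} =>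
      (pLL p0 ν l x.1 / pLLY Yf p0 ν l y) * wdot v ν x.1) (a b : ℝ) :
    kExp Yf p0 ν l y (wdot (a • u + b • v) ν) =
      a * kExp Yf p0 ν l y (wdot u ν) + b * kExp Yf p0 ν l y (wdot v ν) := by
  simp only [kExp, wdot_add, wdot_smul]
  exact tsum_mul_linear_comb hu hv a b

lemma Aaux_linear_comb_sub
    (hk : ∀ γ : Fin n → ℝ, ∀ y ∈ 𝒴, Summable fun x : {x : X // Yf x = y} =>
      (pLL p0 ν l x.1 / pLLY Yf p0 ν l y) * wdot γ ν x.1)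
    {a b : ℝ} (hab : a + b = 1) (u v : Fin n → ℝ) :
    Aaux Yf p0 ν 𝒴 (a • u + b • v) l - (a * Aaux Yf p0 ν 𝒴 u l + b * Aaux Yf p0 ν 𝒴 v l) =
      𝒴.card * (a * pExp p0 ν l (nuBarExp u ν) + b * pExp p0 ν l (nuBarExp v ν) -
        pExp p0 ν l (nuBarExp (a • u + b • v) ν)) := by
  have hK : (𝒴.map fun y => kExp Yf p0 ν l y (wdot (a • u + b • v) ν)).sum =
      a * (𝒴.map fun y => kExp Yf p0 ν l y (wdot u ν)).sum +
        b * (𝒴.map fun y => kExp Yf p0 ν l y (wdot v ν)).sum := by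
    rw [Multiset.map_congr rfl fun y hy => kExp_wdot_linear_comb Yf (hk u y hy) (hk v y hy) a b,
      Multiset.sum_map_add, Multiset.sum_map_mul_left, Multiset.sum_map_mul_left]
  rw [Aaux_eq, Aaux_eq, Aaux_eq, hK]
  linear_combination (-(𝒴.card : ℝ)) * hab

theorem concaveOn_Aaux (hp0 : ∀ x, 0 ≤ p0 x)
    (hk : ∀ γ : Fin n → ℝ, ∀ y ∈ 𝒴, Summable fun x : {x : X // Yf x = y} =>
      (pLL p0 ν l x.1 / pLLY Yf p0 ν l y) * wdot γ ν x.1)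
    (hsum : ∀ γ, Summable fun x => pLL p0 ν l x * nuBarExp γ ν x) :
    ConcaveOn ℝ univ fun γ => Aaux Yf p0 ν 𝒴 γ l := by
  refine ⟨convex_univ, fun u _ v _ a b ha hb hab => ?_⟩
  have hE := (convexOn_pExp_nuBarExp hp0 hsum).2 (mem_univ u) (mem_univ v) ha hb hab
  simp only [smul_eq_mul] at hE ⊢
  have := Aaux_linear_comb_sub Yf 𝒴 hk hab u v
  nlinarith [mul_nonneg (Nat.cast_nonneg 𝒴.card : (0 : ℝ) ≤ 𝒴.card) (sub_nonneg.2 hE)]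

lemma Aaux_lt_of_exists_wdot_ne (hp0 : ∀ x, 0 < p0 x)
    (hk : ∀ γ : Fin n → ℝ, ∀ y ∈ 𝒴, Summable fun x : {x : X // Yf x = y} =>
      (pLL p0 ν l x.1 / pLLY Yf p0 ν l y) * wdot γ ν x.1)
    (hZ : Summable fun x => exp (wdot l ν x) * p0 x)
    (hsum : ∀ γ, Summable fun x => pLL p0 ν l x * nuBarExp γ ν x) (h𝒴 : 𝒴 ≠ 0)
    {u v : Fin n → ℝ} (huv : ∃ x, wdot u ν x ≠ wdot v ν x) {a b : ℝ} (ha : 0 < a) (hb : 0 < b)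
    (hab : a + b = 1) :
    a * Aaux Yf p0 ν 𝒴 u l + b * Aaux Yf p0 ν 𝒴 v l < Aaux Yf p0 ν 𝒴 (a • u + b • v) l := by
  have hE := pExp_nuBarExp_lt hp0 hZ hsum huv ha hb hab
  have hm : (0 : ℝ) < 𝒴.card := by exact_mod_cast Multiset.card_pos.2 h𝒴
  have := Aaux_linear_comb_sub Yf 𝒴 hk hab u v
  nlinarith [mul_pos hm (sub_pos.2 hE)]

end AuxiliaryFunction

section EMBound

variable {X Y : Type*} {n : ℕ} (Yf : X → Y) {p0 : X → ℝ} {ν : Fin n → X → ℕ} {l γ : Fin n → ℝ}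

lemma nonempty_fiber_of_pLLY_pos {y : Y} (hy : 0 < pLLY Yf p0 ν l y) :
    Nonempty {x : X // Yf x = y} := by
  by_contra h
  rw [not_nonempty_iff] at h
  simp [pLLY] at hy

lemma one_sub_pExp_nuBarExp_le [Nonempty X] (hp0 : ∀ x, 0 < p0 x)
    (hν : ∀ x, 1 ≤ nuSharp ν x) (hZl : Summable fun x => exp (wdot l ν x) * p0 x)
    (hZg : Summable fun x => exp (wdot (γ + l) ν x) * p0 x)
    (hsum : Summable fun x => pLL p0 ν l x * nuBarExp γ ν x) :
    1 - pExp p0 ν l (nuBarExp γ ν) ≤ log (Zpart p0 ν l) - log (Zpart p0 ν (γ + l)) := by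
  have hZ := Zpart_pos hp0 hZl
  have hZ' := Zpart_pos hp0 hZg
  have hratio : Zpart p0 ν (γ + l) / Zpart p0 ν l ≤ pExp p0 ν l (nuBarExp γ ν) := by
    rw [← pExp_exp_wdot]
    refine Summable.tsum_le_tsum (fun x => mul_le_mul_of_nonneg_left (exp_wdot_le_nuBarExp (hν x) γ)
      (pLL_nonneg (fun x => (hp0 x).le) x)) ?_ hsum
    exact (hZg.mul_left (Zpart p0 ν l)⁻¹).congr fun x => by
      rw [pLL_eq_inv_mul, wdot_add, exp_add]; ring
  have := log_le_sub_one_of_pos (div_pos hZ' hZ)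
  rw [log_div hZ'.ne' hZ.ne'] at this
  linarith

/-- The conditional law `k_λ` tilted by `e^{γ·ν}` is the conditional law of `γ + λ`, so this is
Jensen's inequality for `log` under `k_λ`. -/
lemma kExp_wdot_add_log_le (hp0 : ∀ x, 0 < p0 x)
    (hZl : Summable fun x => exp (wdot l ν x) * p0 x)
    (hZg : Summable fun x => exp (wdot (γ + l) ν x) * p0 x) {y : Y}
    (hy : 0 < pLLY Yf p0 ν l y)
    (hk : Summable fun x : {x : X // Yf x = y} =>
      (pLL p0 ν l x.1 / pLLY Yf p0 ν l y) * wdot γ ν x.1) :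
    kExp Yf p0 ν l y (wdot γ ν) + (log (Zpart p0 ν l) - log (Zpart p0 ν (γ + l))) ≤
      log (pLLY Yf p0 ν (γ + l) y) - log (pLLY Yf p0 ν l y) := by
  obtain ⟨x₀⟩ := nonempty_fiber_of_pLLY_pos Yf hy
  have : Nonempty X := ⟨x₀.1⟩
  have hZ := Zpart_pos hp0 hZl
  have hZ' := Zpart_pos hp0 hZg
  set c := Zpart p0 ν l / Zpart p0 ν (γ + l)
  have hc : 0 < c := div_pos hZ hZ'
  set q := fun x : {x : X // Yf x = y} => pLL p0 ν l x.1 / pLLY Yf p0 ν l y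
  have hqs : Summable q := ((summable_pLL hZl).subtype _).div_const _
  have hq1 : ∑' x, q x = 1 := by
    simp only [q, tsum_div_const]
    exact div_self hy.ne'
  have hqf : ∀ x, q x * (c * exp (wdot γ ν x.1)) = pLL p0 ν (γ + l) x.1 / pLLY Yf p0 ν l y :=
    fun x => by simp only [q, c, pLL_add γ hZ.ne']; ring
  have hqlog : ∀ x, q x * log (c * exp (wdot γ ν x.1)) = q x * wdot γ ν x.1 + log c * q x :=
    fun x => by rw [log_mul hc.ne' (exp_pos _).ne', log_exp]; ring
  have hpg : 0 < pLLY Yf p0 ν (γ + l) y :=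
    ((summable_pLL hZg).subtype _).tsum_pos (fun x => (pLL_pos hp0 hZg x.1).le) x₀
      (pLL_pos hp0 hZg x₀.1)
  have hJ := tsum_mul_log_le_log_tsum (q := q) (f := fun x => c * exp (wdot γ ν x.1))
    (fun x => div_nonneg (pLL_pos hp0 hZl x.1).le hy.le) hq1
    (fun x => mul_pos hc (exp_pos (wdot γ ν x.1)))
    ((((summable_pLL hZg).subtype _).div_const _).congr fun x => (hqf x).symm)
    ((hk.add (hqs.mul_left (log c))).congr fun x => (hqlog x).symm)
  rw [tsum_congr hqlog, tsum_congr hqf, hk.tsum_add (hqs.mul_left _), tsum_mul_left, hq1,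
    mul_one, tsum_div_const] at hJ
  rw [← log_div hpg.ne' hy.ne', ← log_div hZ.ne' hZ'.ne']
  exact hJ

theorem Aaux_le_LL_sub (hp0 : ∀ x, 0 < p0 x) (hν : ∀ x, 1 ≤ nuSharp ν x) (𝒴 : Multiset Y)
    (hZl : Summable fun x => exp (wdot l ν x) * p0 x)
    (hZg : Summable fun x => exp (wdot (γ + l) ν x) * p0 x)
    (hpos : ∀ y ∈ 𝒴, 0 < pLLY Yf p0 ν l y)
    (hk : ∀ y ∈ 𝒴, Summable fun x : {x : X // Yf x = y} =>
      (pLL p0 ν l x.1 / pLLY Yf p0 ν l y) * wdot γ ν x.1)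
    (hsum : Summable fun x => pLL p0 ν l x * nuBarExp γ ν x) :
    Aaux Yf p0 ν 𝒴 γ l ≤ LL Yf p0 ν 𝒴 (γ + l) - LL Yf p0 ν 𝒴 l := by
  rw [LL, LL, ← Multiset.sum_map_sub]
  refine Multiset.sum_map_le_sum_map _ _ fun y hy => ?_
  obtain ⟨x₀⟩ := nonempty_fiber_of_pLLY_pos Yf (hpos y hy)
  have : Nonempty X := ⟨x₀.1⟩
  have := kExp_wdot_add_log_le Yf hp0 hZl hZg (hpos y hy) (hk y hy)
  have := one_sub_pExp_nuBarExp_le hp0 hν hZl hZg hsum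
  change 1 + kExp Yf p0 ν l y (wdot γ ν) - pExp p0 ν l (nuBarExp γ ν) ≤ _
  linarith

end EMBound

theorem im_step_equality_iff_fixed_iff_critical_general
    {X Y : Type*} (Yf : X → Y)
    (p0 : X → ℝ) (hp0 : ∀ x, 0 < p0 x)
    {n : ℕ} (ν : Fin n → X → ℕ) (hν : ∀ x, 1 ≤ nuSharp ν x)
    (𝒴 : Multiset Y) (l γh : Fin n → ℝ)
    (hZl : Summable fun x : X => Real.exp (wdot l ν x) * p0 x)
    (hZgh : Summable fun x : X => Real.exp (wdot (γh + l) ν x) * p0 x)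
    (hpos : ∀ y ∈ 𝒴, 0 < pLLY Yf p0 ν l y)
    (hmax : ∀ γ : Fin n → ℝ, Aaux Yf p0 ν 𝒴 γ l ≤ Aaux Yf p0 ν 𝒴 γh l)
    (hksum : ∀ γ : Fin n → ℝ, ∀ y ∈ 𝒴, Summable fun x : {x : X // Yf x = y} =>
      (pLL p0 ν l x.1 / pLLY Yf p0 ν l y) * wdot γ ν x.1)
    (hpsum : ∀ γ : Fin n → ℝ, Summable fun x : X => pLL p0 ν l x *
      ∑ i, ((ν i x : ℝ) / (nuSharp ν x : ℝ)) * Real.exp (γ i * (nuSharp ν x : ℝ)))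
    (hderiv : ∀ γ : Fin n → ℝ, ∃ D : ℝ,
      HasDerivAt (fun t : ℝ => Aaux Yf p0 ν 𝒴 (t • γ) l) D 0 ∧
      HasDerivAt (fun t : ℝ => LL Yf p0 ν 𝒴 (l + t • γ)) D 0) :
    (LL Yf p0 ν 𝒴 (γh + l) = LL Yf p0 ν 𝒴 l ↔
      ∀ γ : Fin n → ℝ, Aaux Yf p0 ν 𝒴 γ l ≤ Aaux Yf p0 ν 𝒴 (0 : Fin n → ℝ) l) ∧
    ((∀ γ : Fin n → ℝ, Aaux Yf p0 ν 𝒴 γ l ≤ Aaux Yf p0 ν 𝒴 (0 : Fin n → ℝ) l) ↔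
      ∀ γ : Fin n → ℝ, HasDerivAt (fun t : ℝ => LL Yf p0 ν 𝒴 (l + t • γ)) 0 0) := by
  by_cases h𝒴 : 𝒴 = 0
  · subst h𝒴
    simp [LL, Aaux, hasDerivAt_const]
  obtain ⟨y, hy⟩ := Multiset.exists_mem_of_ne_zero h𝒴
  obtain ⟨x₀⟩ := nonempty_fiber_of_pLLY_pos Yf (hpos y hy)
  have : Nonempty X := ⟨x₀.1⟩
  have hA0 := Aaux_zero Yf 𝒴 hp0 hν hZl
  have hconc := concaveOn_Aaux Yf 𝒴 (fun x => (hp0 x).le) hksum hpsum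
  refine ⟨⟨fun hL γ => ?_, fun hfix => ?_⟩, fun hfix γ => ?_, fun hcrit γ => ?_⟩
  · have := Aaux_le_LL_sub Yf hp0 hν 𝒴 hZl hZgh hpos (hksum γh) (hpsum γh)
    linarith [hmax γ]
  · have hAγh : Aaux Yf p0 ν 𝒴 γh l = 0 := le_antisymm (hA0 ▸ hfix γh) (hA0 ▸ hmax 0)
    refine LL_add_of_wdot_eq_zero Yf 𝒴 fun x => ?_
    by_contra hx
    have := Aaux_lt_of_exists_wdot_ne Yf 𝒴 hp0 hksum hZl hpsum h𝒴 (u := 0)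
      ⟨x, by simpa [wdot] using Ne.symm hx⟩ one_half_pos one_half_pos (add_halves 1)
    simp only [smul_zero, zero_add, hA0, hAγh, mul_zero, add_zero] at this
    linarith [hfix ((1 / 2 : ℝ) • γh)]
  · obtain ⟨D, hA, hL⟩ := hderiv γ
    have hloc : IsLocalMax (fun t : ℝ => Aaux Yf p0 ν 𝒴 (t • γ) l) 0 :=
      Filter.Eventually.of_forall fun t => by simpa using hfix (t • γ)
    rwa [hloc.hasDerivAt_eq_zero hA] at hL
  · obtain ⟨D, hA, hL⟩ := hderiv γ
    rw [hL.unique (hcrit γ)] at hA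
    have := (hconc.comp_linearMap (LinearMap.toSpanSingleton ℝ _ γ)).slope_le_of_hasDerivAt
      (mem_univ 0) (mem_univ 1) one_pos hA
    simpa [slope] using this

/-- Theorem 4 (equality case): `L(M(λ)) = L(λ)` iff `λ` is a fixed point of `M`
(i.e. `γ = 0` maximizes `A(·,λ)`) iff `λ` is a critical point of `L`. -/
theorem im_step_equality_iff_fixed_iff_critical
    {X Y : Type*} [Countable X] (Yf : X → Y)
    (p0 : X → ℝ) (hp0 : ∀ x, 0 < p0 x) (hp0sum : ∑' x : X, p0 x = 1)
    {n : ℕ} (ν : Fin n → X → ℕ) (hν : ∀ x, 1 ≤ nuSharp ν x)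
    (𝒴 : Multiset Y) (l γh : Fin n → ℝ)
    (hZl : Summable fun x : X => Real.exp (wdot l ν x) * p0 x)
    (hZgh : Summable fun x : X => Real.exp (wdot (γh + l) ν x) * p0 x)
    (hpos : ∀ y ∈ 𝒴, 0 < pLLY Yf p0 ν l y)
    (hmax : ∀ γ : Fin n → ℝ, Aaux Yf p0 ν 𝒴 γ l ≤ Aaux Yf p0 ν 𝒴 γh l)
    (hksum : ∀ γ : Fin n → ℝ, ∀ y ∈ 𝒴, Summable fun x : {x : X // Yf x = y} =>
      (pLL p0 ν l x.1 / pLLY Yf p0 ν l y) * wdot γ ν x.1)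
    (hpsum : ∀ γ : Fin n → ℝ, Summable fun x : X => pLL p0 ν l x *
      ∑ i, ((ν i x : ℝ) / (nuSharp ν x : ℝ)) * Real.exp (γ i * (nuSharp ν x : ℝ)))
    (hderiv : ∀ γ : Fin n → ℝ, ∃ D : ℝ,
      HasDerivAt (fun t : ℝ => Aaux Yf p0 ν 𝒴 (t • γ) l) D 0 ∧
      HasDerivAt (fun t : ℝ => LL Yf p0 ν 𝒴 (l + t • γ)) D 0) :
    (LL Yf p0 ν 𝒴 (γh + l) = LL Yf p0 ν 𝒴 l ↔
      ∀ γ : Fin n → ℝ, Aaux Yf p0 ν 𝒴 γ l ≤ Aaux Yf p0 ν 𝒴 (0 : Fin n → ℝ) l) ∧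
    ((∀ γ : Fin n → ℝ, Aaux Yf p0 ν 𝒴 γ l ≤ Aaux Yf p0 ν 𝒴 (0 : Fin n → ℝ) l) ↔
      ∀ γ : Fin n → ℝ, HasDerivAt (fun t : ℝ => LL Yf p0 ν 𝒴 (l + t • γ)) 0 0) :=
  im_step_equality_iff_fixed_iff_critical_general Yf p0 hp0 ν hν 𝒴 l γh hZl hZgh hpos hmax hksum
    hpsum hderiv
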